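/- In the splits-and-merges setup, assume every value m(y) is invertible and central in R, and that 𝒯 ⊆ R is a G-stable subring containing m(y)^{±1} for all y ∈ Y. With B^𝒯, A^𝒯, C^𝒯 as in the coil Schur duality setup, fix λ, μ ∈ Λ and set A^𝒯_{μλ} := 1_μ * A^𝒯 * 1_λ and C^𝒯_μ := 1_μ * C^𝒯. Define m̃_λ ∈ R_G(X×X) by m̃_λ(x,x') = δ_{x,x'}·e(x)·m(p_λ(x)). Then { h ∈ C^𝒯_μ : h*K_λ = h*m̃_λ } = A^𝒯_{μλ} * M_λ. -/

import Mathlib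

/-!
In the coil Schur duality setup:
`{ h ∈ C^𝒯_μ : h*K_λ = h*m̃_λ } = A^𝒯_{μλ} * M_λ`.
-/

open Finset

section Defs

variable (k : Type*) {G R : Type*} {Λ : Type*}
variable [Field k] [Group G] [Ring R] [Algebra k R]
  [MulSemiringAction G R] [SMulCommClass G k R]
variable [Fintype Λ] [DecidableEq Λ]
variable (Yf : Λ → Type*) [∀ l, Fintype (Yf l)] [∀ l, DecidableEq (Yf l)]
  [∀ l, MulAction G (Yf l)]

/-- The disjoint union `Y = ⨿_λ Y_λ`. -/
abbrev YS := (l : Λ) × Yf l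

/-- Twisted convolution of `R`-valued kernels on `Y × Y`, with twist `e`. -/
noncomputable def conv (e : YS Yf → R) (f g : YS Yf → YS Yf → R) :
    YS Yf → YS Yf → R :=
  fun a b => ∑ c, f a c * Ring.inverse (e c) * g c b

variable (ω : Λ) (p : ∀ l, Yf ω → Yf l) (e : YS Yf → R)

/-- The idempotent `1_λ`, supported on `Y_λ × Y_λ`: `1_λ(y,y') = δ_{y,y'} e(y)`. -/
noncomputable def oneEl (l : Λ) : YS Yf → YS Yf → R :=
  fun a b => if a = b ∧ a.1 = l then e a else 0

/-- The split `S_λ(x,y) = δ_{p_λ(x),y}·e(y)`, supported on `X × Y_λ`. -/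
noncomputable def Sel (l : Λ) : YS Yf → YS Yf → R :=
  fun a b =>
    if h : a.1 = ω ∧ b.1 = l then (if p l (h.1 ▸ a.2) = h.2 ▸ b.2 then e b else 0)
    else 0

/-- The merge `M_λ(y,x) = δ_{y,p_λ(x)}·e(y)`, supported on `Y_λ × X`. -/
noncomputable def Mel (l : Λ) : YS Yf → YS Yf → R :=
  fun a b =>
    if h : a.1 = l ∧ b.1 = ω then (if h.1 ▸ a.2 = p l (h.2 ▸ b.2) then e a else 0)
    else 0

/-- `K_λ(x,x') = δ_{p_λ(x),p_λ(x')}·e(p_λ(x))`, supported on `X × X`. -/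
noncomputable def Kel (l : Λ) : YS Yf → YS Yf → R :=
  fun a b =>
    if h : a.1 = ω ∧ b.1 = ω then
      (if p l (h.1 ▸ a.2) = p l (h.2 ▸ b.2) then e ⟨l, p l (h.1 ▸ a.2)⟩ else 0)
    else 0

/-- The diagonal element `t_ω(x,x') = δ_{x,x'}·e(x)·t(x)`, supported on `X × X`. -/
noncomputable def tEl (t : Yf ω → R) : YS Yf → YS Yf → R :=
  fun a b => if h : a = b ∧ a.1 = ω then e a * t (h.2 ▸ a.2) else 0

/-- `m(y) = ∑_{x ∈ p_λ⁻¹(y)} e(x)⁻¹·e(y)` for `y ∈ Y_λ`. -/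
noncomputable def mval (l : Λ) (y : Yf l) : R :=
  ∑ x : Yf ω, if p l x = y then Ring.inverse (e ⟨ω, x⟩) * e ⟨l, y⟩ else 0

end Defs

/-- The 𝕜-subalgebra `B^𝒯` of the twisted convolution algebra `R_G(X×X)`,
generated by the `K_λ` and the diagonal elements `t_ω` for `G`-equivariant
`𝒯`-valued functions `t` on `X`.  (Membership predicate.) -/
inductive InB (k G : Type*) {R : Type*} {Λ : Type*} [Field k] [Group G] [Ring R]
    [Algebra k R] [MulSemiringAction G R] [SMulCommClass G k R]
    [Fintype Λ] [DecidableEq Λ]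
    (Yf : Λ → Type*) [∀ l, Fintype (Yf l)] [∀ l, DecidableEq (Yf l)]
    [∀ l, MulAction G (Yf l)]
    (ω : Λ) (p : ∀ l, Yf ω → Yf l) (e : YS Yf → R) (T : Subring R) :
    (YS Yf → YS Yf → R) → Prop
  | K (l : Λ) : InB k G Yf ω p e T (Kel Yf ω p e l)
  | t (t : Yf ω → R) (ht : ∀ (g : G) (y : Yf ω), t (g • y) = g • t y)
      (hT : ∀ y, t y ∈ T) : InB k G Yf ω p e T (tEl Yf ω e t)
  | add {f g} : InB k G Yf ω p e T f → InB k G Yf ω p e T g → InB k G Yf ω p e T (f + g)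
  | smul (c : k) {f} : InB k G Yf ω p e T f → InB k G Yf ω p e T (c • f)
  | mul {f g} : InB k G Yf ω p e T f → InB k G Yf ω p e T g →
      InB k G Yf ω p e T (conv Yf e f g)

/-- The 𝕜-subalgebra `A^𝒯` of the twisted convolution algebra
`⊕_{λ,μ} R_G(Y_λ×Y_μ)`, generated by `B^𝒯` and all splits and merges.
(Membership predicate.) -/
inductive InA (k G : Type*) {R : Type*} {Λ : Type*} [Field k] [Group G] [Ring R]
    [Algebra k R] [MulSemiringAction G R] [SMulCommClass G k R]
    [Fintype Λ] [DecidableEq Λ]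
    (Yf : Λ → Type*) [∀ l, Fintype (Yf l)] [∀ l, DecidableEq (Yf l)]
    [∀ l, MulAction G (Yf l)]
    (ω : Λ) (p : ∀ l, Yf ω → Yf l) (e : YS Yf → R) (T : Subring R) :
    (YS Yf → YS Yf → R) → Prop
  | ofB {f} : InB k G Yf ω p e T f → InA k G Yf ω p e T f
  | S (l : Λ) : InA k G Yf ω p e T (Sel Yf ω p e l)
  | M (l : Λ) : InA k G Yf ω p e T (Mel Yf ω p e l)
  | add {f g} : InA k G Yf ω p e T f → InA k G Yf ω p e T g → InA k G Yf ω p e T (f + g)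
  | smul (c : k) {f} : InA k G Yf ω p e T f → InA k G Yf ω p e T (c • f)
  | mul {f g} : InA k G Yf ω p e T f → InA k G Yf ω p e T g →
      InA k G Yf ω p e T (conv Yf e f g)


/-- `m̃_λ(x,x') = δ_{x,x'}·e(x)·m(p_λ(x))`, supported on `X × X`. -/
noncomputable def mtil (k G : Type*) {R : Type*} {Λ : Type*} [Field k] [Group G] [Ring R]
    [Algebra k R] [MulSemiringAction G R] [SMulCommClass G k R]
    [Fintype Λ] [DecidableEq Λ]
    (Yf : Λ → Type*) [∀ l, Fintype (Yf l)] [∀ l, DecidableEq (Yf l)]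
    [∀ l, MulAction G (Yf l)]
    (ω : Λ) (p : ∀ l, Yf ω → Yf l) (e : YS Yf → R) (l : Λ) :
    YS Yf → YS Yf → R :=
  fun a b =>
    if h : a = b ∧ a.1 = ω then e a * mval Yf ω p e l (p l (h.2 ▸ a.2)) else 0

/-
Write `d_q` for the diagonal kernel `tEl` with values `q`. The identities `S_λ * M_λ = K_λ`,
`M_λ * S_λ = d_m` and `M_λ * d_{q ∘ p_λ} = d_q * M_λ` give `M_λ * K_λ = M_λ * m̃_λ`, hence `⊇`.
Conversely, if `h = h * 1_ω` and `h * K_λ = h * m̃_λ`, multiplying on the right by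
`d_{m⁻¹ ∘ p_λ}` gives `h = h * S_λ * d_{m⁻¹} * M_λ`, and `d_{m⁻¹} = M_λ * d_{m⁻² ∘ p_λ} * S_λ`
lies in `A^𝒯` because `m⁻¹` takes values in `𝒯`.
-/

theorem RingEquiv.map_ringInverse {R S : Type*} [Ring R] [Ring S] (f : R ≃+* S) (r : R) :
    f (Ring.inverse r) = Ring.inverse (f r) := by
  by_cases hr : IsUnit r
  · have hfr : IsUnit (f r) := hr.map f
    rw [← one_mul (f (Ring.inverse r)), ← Ring.inverse_mul_cancel _ hfr, mul_assoc, ← map_mul,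
      Ring.mul_inverse_cancel _ hr, map_one, mul_one]
  · rw [Ring.inverse_non_unit _ hr, Ring.inverse_non_unit _ (by rwa [isUnit_map_iff]), map_zero]

section Equivariance

variable {G R Λ : Type*} [Group G] [Ring R] [MulSemiringAction G R]

theorem smul_ringInverse (g : G) (r : R) : g • Ring.inverse r = Ring.inverse (g • r) :=
  (MulSemiringAction.toRingEquiv G R g).map_ringInverse r

variable {Yf : Λ → Type*} [∀ l, Fintype (Yf l)]
  [∀ l, DecidableEq (Yf l)] [∀ l, MulAction G (Yf l)] {ω : Λ} {p : ∀ l, Yf ω → Yf l}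
  {e : YS Yf → R}

theorem mval_smul (hpequiv : ∀ (l : Λ) (g : G) (x : Yf ω), p l (g • x) = g • p l x)
    (hee : ∀ (g : G) (l : Λ) (y : Yf l), e ⟨l, g • y⟩ = g • e ⟨l, y⟩)
    (l : Λ) (g : G) (y : Yf l) :
    mval Yf ω p e l (g • y) = g • mval Yf ω p e l y := by
  rw [mval, mval, smul_sum]
  refine (Fintype.sum_equiv (MulAction.toPerm g) _ _ fun x => ?_).symm
  simp only [MulAction.toPerm_apply, hpequiv, smul_left_cancel_iff]
  split_ifs <;> simp [smul_mul', smul_ringInverse, hee]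

end Equivariance

section Kernels

variable {R Λ : Type*} [Ring R] {Yf : Λ → Type*} {e : YS Yf → R}

local infixl:70 " ⋆ " => conv Yf e

theorem oneEl_eq_tEl_one [DecidableEq Λ] [∀ l, DecidableEq (Yf l)] (l : Λ) :
    oneEl Yf e l = tEl Yf l e 1 := by
  funext a b
  simp only [oneEl, tEl, Pi.one_apply, mul_one, dite_eq_ite]

variable [Fintype Λ] [∀ l, Fintype (Yf l)]

theorem conv_assoc (f g h : YS Yf → YS Yf → R) : f ⋆ g ⋆ h = f ⋆ (g ⋆ h) := by
  funext a b
  simp only [conv, sum_mul, mul_sum]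
  rw [sum_comm]
  simp only [mul_assoc]

theorem conv_add_left (f g h : YS Yf → YS Yf → R) : (f + g) ⋆ h = f ⋆ h + g ⋆ h := by
  funext a b
  simp [conv, add_mul, sum_add_distrib]

theorem conv_smul_left {S : Type*} [DistribSMul S R] [IsScalarTower S R R] (c : S)
    (f g : YS Yf → YS Yf → R) :
    (c • f) ⋆ g = c • (f ⋆ g) := by
  funext a b
  simp only [conv, Pi.smul_apply, smul_sum, smul_mul_assoc]

variable [DecidableEq Λ] [∀ l, DecidableEq (Yf l)]

theorem tEl_conv_tEl (heu : ∀ a, IsUnit (e a)) (l : Λ) (s t : Yf l → R) :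
    tEl Yf l e s ⋆ tEl Yf l e t = tEl Yf l e (s * t) := by
  funext ⟨la, xa⟩ b
  simp only [conv, tEl]
  rw [sum_eq_single ⟨la, xa⟩ (fun c _ hc => by simp [Ne.symm hc]) (by simp)]
  by_cases hl : la = l
  · subst hl
    by_cases hb : ⟨la, xa⟩ = b
    · subst hb
      simp [mul_assoc, Ring.inverse_mul_cancel_left _ _ (heu _)]
    · simp [hb]
  · simp [hl]

variable {ω : Λ} {p : ∀ l, Yf ω → Yf l}

theorem Mel_conv_Sel (l : Λ) :
    Mel Yf ω p e l ⋆ Sel Yf ω p e l = tEl Yf l e (mval Yf ω p e l) := by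
  funext ⟨la, y⟩ ⟨lb, y'⟩
  simp only [conv, Mel, Sel, tEl]
  rcases eq_or_ne la l with rfl | hla
  · rcases eq_or_ne lb la with rfl | hlb
    · rw [← univ_sigma_univ, sum_sigma, sum_eq_single ω (fun c _ hc => by simp [hc]) (by simp)]
      rcases eq_or_ne y y' with rfl | hy
      · simp only [mval, mul_sum]
        refine sum_congr rfl fun x _ => ?_
        by_cases hx : p lb x = y <;> simp [hx, mul_assoc]
      · rw [dif_neg fun h => hy (sigma_mk_injective h.1)]
        refine sum_eq_zero fun x _ => ?_
        by_cases hx : p lb x = y' <;> simp [hx, hy]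
    · simp [hlb, Ne.symm hlb]
  · simp [hla]

theorem Sel_conv_Mel (heu : ∀ a, IsUnit (e a)) (l : Λ) :
    Sel Yf ω p e l ⋆ Mel Yf ω p e l = Kel Yf ω p e l := by
  funext ⟨la, x⟩ ⟨lb, x'⟩
  simp only [conv, Sel, Mel, Kel]
  rcases eq_or_ne la ω with rfl | hla
  · rcases eq_or_ne lb la with rfl | hlb
    · rw [← univ_sigma_univ, sum_sigma, sum_eq_single l (fun lc _ hl => by simp [hl]) (by simp),
        sum_eq_single (p l x) (fun y _ hy => by simp [Ne.symm hy]) (by simp)]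
      by_cases hx : p l x = p l x' <;> simp [hx, Ring.mul_inverse_cancel _ (heu _)]
    · simp [hlb]
  · simp [hla]

theorem Mel_conv_tEl_comp (heu : ∀ a, IsUnit (e a)) (l : Λ) (q : Yf l → R) :
    Mel Yf ω p e l ⋆ tEl Yf ω e (q ∘ p l) = tEl Yf l e q ⋆ Mel Yf ω p e l := by
  funext ⟨la, y⟩ ⟨lb, x⟩
  simp only [conv, Mel, tEl]
  rw [sum_eq_single ⟨lb, x⟩ (fun c _ hc => by simp [hc]) (by simp),
    sum_eq_single ⟨la, y⟩ (fun c _ hc => by simp [Ne.symm hc]) (by simp)]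
  rcases eq_or_ne la l with rfl | hla
  · rcases eq_or_ne lb ω with rfl | hlb
    · by_cases hy : y = p la x
      · subst hy
        simp [mul_assoc, Ring.inverse_mul_cancel_left _ _ (heu _),
          Ring.inverse_mul_cancel_right _ _ (heu _)]
      · simp [hy]
    · simp [hlb]
  · simp [hla]

theorem tEl_conv_oneEl (heu : ∀ a, IsUnit (e a)) (l : Λ) (q : Yf l → R) :
    tEl Yf l e q ⋆ oneEl Yf e l = tEl Yf l e q := by
  rw [oneEl_eq_tEl_one, tEl_conv_tEl heu, mul_one]

theorem oneEl_conv_oneEl (heu : ∀ a, IsUnit (e a)) (l : Λ) :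
    oneEl Yf e l ⋆ oneEl Yf e l = oneEl Yf e l := by
  rw [oneEl_eq_tEl_one, tEl_conv_tEl heu, mul_one]

theorem Mel_conv_oneEl (heu : ∀ a, IsUnit (e a)) (l : Λ) :
    Mel Yf ω p e l ⋆ oneEl Yf e ω = Mel Yf ω p e l := by
  funext a ⟨lb, x⟩
  simp only [conv, oneEl]
  rw [sum_eq_single ⟨lb, x⟩ (fun c _ hc => by simp [hc]) (by simp)]
  rcases eq_or_ne lb ω with rfl | hlb
  · simp [Ring.inverse_mul_cancel_right _ _ (heu _)]
  · simp [Mel, hlb]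

theorem oneEl_conv_Mel (heu : ∀ a, IsUnit (e a)) (l : Λ) :
    oneEl Yf e l ⋆ Mel Yf ω p e l = Mel Yf ω p e l := by
  rw [oneEl_eq_tEl_one, ← Mel_conv_tEl_comp heu, Pi.one_comp, ← oneEl_eq_tEl_one,
    Mel_conv_oneEl heu]

theorem Mel_conv_Kel (heu : ∀ a, IsUnit (e a)) (l : Λ) :
    Mel Yf ω p e l ⋆ Kel Yf ω p e l = Mel Yf ω p e l ⋆ tEl Yf ω e (mval Yf ω p e l ∘ p l) := by
  rw [← Sel_conv_Mel heu, ← conv_assoc, Mel_conv_Sel, Mel_conv_tEl_comp heu]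

theorem Mel_conv_tEl_comp_conv_Sel (heu : ∀ a, IsUnit (e a)) (l : Λ) (q : Yf l → R) :
    Mel Yf ω p e l ⋆ tEl Yf ω e (q ∘ p l) ⋆ Sel Yf ω p e l =
      tEl Yf l e (q * mval Yf ω p e l) := by
  rw [Mel_conv_tEl_comp heu, conv_assoc, Mel_conv_Sel, tEl_conv_tEl heu]

theorem conv_eq_conv_Sel_conv_tEl_inverse_conv_Mel (heu : ∀ a, IsUnit (e a)) {l : Λ}
    (hm_unit : ∀ y, IsUnit (mval Yf ω p e l y)) {h : YS Yf → YS Yf → R}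
    (hK : h ⋆ Kel Yf ω p e l = h ⋆ tEl Yf ω e (mval Yf ω p e l ∘ p l)) :
    h ⋆ oneEl Yf e ω =
      h ⋆ Sel Yf ω p e l ⋆ tEl Yf l e (fun y => Ring.inverse (mval Yf ω p e l y)) ⋆
        Mel Yf ω p e l := by
  have hmul : mval Yf ω p e l * (fun y => Ring.inverse (mval Yf ω p e l y)) = 1 :=
    funext fun y => Ring.mul_inverse_cancel _ (hm_unit y)
  rw [conv_assoc _ _ (Mel Yf ω p e l), ← Mel_conv_tEl_comp heu, ← conv_assoc, conv_assoc h,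
    Sel_conv_Mel heu, hK, conv_assoc, tEl_conv_tEl heu, ← Pi.mul_comp, hmul, Pi.one_comp,
    oneEl_eq_tEl_one]

variable {k G : Type*} [Field k] [Group G] [Algebra k R] [MulSemiringAction G R]
  [SMulCommClass G k R] [∀ l, MulAction G (Yf l)] {T : Subring R}

theorem mtil_eq_tEl (l : Λ) : mtil k G Yf ω p e l = tEl Yf ω e (mval Yf ω p e l ∘ p l) := rfl

theorem InB.oneEl : InB k G Yf ω p e T (oneEl Yf e ω) := by
  rw [oneEl_eq_tEl_one]
  exact InB.t 1 (fun g _ => (smul_one g).symm) (fun _ => T.one_mem)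

theorem exists_InA_of_mem_span {g x : YS Yf → YS Yf → R}
    (hx : x ∈ Submodule.span k {x | ∃ a, InA k G Yf ω p e T a ∧ x = a ⋆ g}) :
    ∃ a, InA k G Yf ω p e T a ∧ x = a ⋆ g := by
  induction hx using Submodule.span_induction with
  | mem x hx => exact hx
  | zero => exact ⟨(0 : k) • Sel Yf ω p e ω, (InA.S ω).smul 0, by rw [conv_smul_left, zero_smul]⟩
  | add x y _ _ hx hy =>
    obtain ⟨a, ha, rfl⟩ := hx
    obtain ⟨b, hb, rfl⟩ := hy
    exact ⟨a + b, ha.add hb, (conv_add_left a b g).symm⟩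
  | smul c x _ hx =>
    obtain ⟨a, ha, rfl⟩ := hx
    exact ⟨c • a, ha.smul c, (conv_smul_left c a g).symm⟩

theorem InA.tEl_inverse_mval
    (hpequiv : ∀ (l : Λ) (g : G) (x : Yf ω), p l (g • x) = g • p l x)
    (hee : ∀ (g : G) (l : Λ) (y : Yf l), e ⟨l, g • y⟩ = g • e ⟨l, y⟩)
    (heu : ∀ a, IsUnit (e a)) {l : Λ} (hm_unit : ∀ y, IsUnit (mval Yf ω p e l y))
    (hm_inv_T : ∀ y, Ring.inverse (mval Yf ω p e l y) ∈ T) :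
    InA k G Yf ω p e T (tEl Yf l e (fun y => Ring.inverse (mval Yf ω p e l y))) := by
  set minv : Yf l → R := fun y => Ring.inverse (mval Yf ω p e l y)
  have hminv : (minv * minv) * mval Yf ω p e l = minv :=
    funext fun y => Ring.inverse_mul_cancel_right _ _ (hm_unit y)
  have ht : InB k G Yf ω p e T (tEl Yf ω e ((minv * minv) ∘ p l)) := by
    refine InB.t _ (fun g x => ?_) (fun x => T.mul_mem (hm_inv_T _) (hm_inv_T _))
    simp only [minv, Function.comp_apply, Pi.mul_apply, hpequiv, mval_smul hpequiv hee,
      smul_ringInverse, smul_mul']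
  rw [← hminv, ← Mel_conv_tEl_comp_conv_Sel heu]
  exact ((InA.M l).mul (InA.ofB ht)).mul (InA.S l)

theorem exists_InA_eq_of_conv_Kel_eq_conv_mtil
    (hpequiv : ∀ (l : Λ) (g : G) (x : Yf ω), p l (g • x) = g • p l x)
    (hee : ∀ (g : G) (l : Λ) (y : Yf l), e ⟨l, g • y⟩ = g • e ⟨l, y⟩)
    (heu : ∀ a, IsUnit (e a)) {l μ : Λ} (hm_unit : ∀ y, IsUnit (mval Yf ω p e l y))
    (hm_inv_T : ∀ y, Ring.inverse (mval Yf ω p e l y) ∈ T) {c h : YS Yf → YS Yf → R}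
    (hc : c ∈ Submodule.span k {x | ∃ a, InA k G Yf ω p e T a ∧ x = a ⋆ oneEl Yf e ω})
    (hh : h = oneEl Yf e μ ⋆ c) (hK : h ⋆ Kel Yf ω p e l = h ⋆ mtil k G Yf ω p e l) :
    ∃ a, InA k G Yf ω p e T a ∧ h = oneEl Yf e μ ⋆ a ⋆ oneEl Yf e l ⋆ Mel Yf ω p e l := by
  obtain ⟨a, ha, rfl⟩ := exists_InA_of_mem_span hc
  set d := tEl Yf l e (fun y => Ring.inverse (mval Yf ω p e l y))
  have hd : d ⋆ oneEl Yf e l = d := tEl_conv_oneEl heu l _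
  refine ⟨a ⋆ oneEl Yf e ω ⋆ Sel Yf ω p e l ⋆ d,
    ((ha.mul (InA.ofB InB.oneEl)).mul (InA.S l)).mul
      (InA.tEl_inverse_mval hpequiv hee heu hm_unit hm_inv_T), ?_⟩
  calc h = h ⋆ oneEl Yf e ω := by rw [hh, conv_assoc, conv_assoc, oneEl_conv_oneEl heu]
    _ = h ⋆ Sel Yf ω p e l ⋆ d ⋆ Mel Yf ω p e l :=
      conv_eq_conv_Sel_conv_tEl_inverse_conv_Mel heu hm_unit hK
    _ = oneEl Yf e μ ⋆ (a ⋆ oneEl Yf e ω ⋆ Sel Yf ω p e l ⋆ (d ⋆ oneEl Yf e l)) ⋆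
          Mel Yf ω p e l := by
      rw [hd, hh]
      simp only [conv_assoc]
    _ = oneEl Yf e μ ⋆ (a ⋆ oneEl Yf e ω ⋆ Sel Yf ω p e l ⋆ d) ⋆ oneEl Yf e l ⋆
          Mel Yf ω p e l := by
      simp only [conv_assoc]

end Kernels

theorem stmt6_general (k : Type*) {G R : Type*} {Λ : Type*} [Field k] [Group G]
    [Ring R] [Algebra k R] [MulSemiringAction G R] [SMulCommClass G k R]
    [Fintype Λ] [DecidableEq Λ]
    (Yf : Λ → Type*) [∀ l, Fintype (Yf l)] [∀ l, DecidableEq (Yf l)]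
    [∀ l, MulAction G (Yf l)]
    (ω : Λ) (p : ∀ l, Yf ω → Yf l)
    (hpequiv : ∀ (l : Λ) (g : G) (x : Yf ω), p l (g • x) = g • p l x)
    (e : YS Yf → R)
    (hee : ∀ (g : G) (l : Λ) (y : Yf l), e ⟨l, g • y⟩ = g • e ⟨l, y⟩)
    (heu : ∀ a, IsUnit (e a))
    (T : Subring R)
    (hm_unit : ∀ (l : Λ) (y : Yf l), IsUnit (mval Yf ω p e l y))
    (hm_inv_T : ∀ (l : Λ) (y : Yf l), Ring.inverse (mval Yf ω p e l y) ∈ T)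
    (lam mu : Λ) :
    -- `{ h ∈ C^𝒯_μ : h*K_λ = h*m̃_λ } = A^𝒯_{μλ} * M_λ`
    {h : YS Yf → YS Yf → R |
      (∃ c ∈ Submodule.span k
          {x | ∃ a, InA k G Yf ω p e T a ∧ x = conv Yf e a (oneEl Yf e ω)},
        h = conv Yf e (oneEl Yf e mu) c) ∧
      conv Yf e h (Kel Yf ω p e lam) = conv Yf e h (mtil k G Yf ω p e lam)} =
    {x : YS Yf → YS Yf → R |
      ∃ a, InA k G Yf ω p e T a ∧
        x = conv Yf e
          (conv Yf e (conv Yf e (oneEl Yf e mu) a) (oneEl Yf e lam))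
          (Mel Yf ω p e lam)} := by
  ext h
  constructor
  · rintro ⟨⟨c, hc, hh⟩, hK⟩
    exact exists_InA_eq_of_conv_Kel_eq_conv_mtil hpequiv hee heu (hm_unit lam) (hm_inv_T lam)
      hc hh hK
  · rintro ⟨a, ha, rfl⟩
    refine ⟨⟨conv Yf e (conv Yf e a (Mel Yf ω p e lam)) (oneEl Yf e ω),
      Submodule.subset_span ⟨_, ha.mul (InA.M lam), rfl⟩, ?_⟩, ?_⟩
    · rw [conv_assoc _ (oneEl Yf e lam), oneEl_conv_Mel heu, conv_assoc a, Mel_conv_oneEl heu,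
        conv_assoc]
    · rw [conv_assoc _ (Mel Yf ω p e lam), conv_assoc _ (Mel Yf ω p e lam), Mel_conv_Kel heu,
        mtil_eq_tEl]

theorem stmt6 (k : Type*) {G R : Type*} {Λ : Type*} [Field k] [Group G] [Fintype G]
    [Ring R] [Algebra k R] [MulSemiringAction G R] [SMulCommClass G k R]
    [Fintype Λ] [DecidableEq Λ]
    (Yf : Λ → Type*) [∀ l, Fintype (Yf l)] [∀ l, DecidableEq (Yf l)]
    [∀ l, MulAction G (Yf l)]
    (ω : Λ) (p : ∀ l, Yf ω → Yf l)
    (hpid : ∀ x, p ω x = x)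
    (hpsurj : ∀ l, Function.Surjective (p l))
    (hpequiv : ∀ (l : Λ) (g : G) (x : Yf ω), p l (g • x) = g • p l x)
    (e : YS Yf → R)
    (hee : ∀ (g : G) (l : Λ) (y : Yf l), e ⟨l, g • y⟩ = g • e ⟨l, y⟩)
    (heu : ∀ a, IsUnit (e a))
    (T : Subring R) (hTg : ∀ (g : G) (r : R), r ∈ T → g • r ∈ T)
    (hm_unit : ∀ (l : Λ) (y : Yf l), IsUnit (mval Yf ω p e l y))
    (hm_central : ∀ (l : Λ) (y : Yf l) (r : R),
        mval Yf ω p e l y * r = r * mval Yf ω p e l y)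
    (hm_T : ∀ (l : Λ) (y : Yf l), mval Yf ω p e l y ∈ T)
    (hm_inv_T : ∀ (l : Λ) (y : Yf l), Ring.inverse (mval Yf ω p e l y) ∈ T)
    (lam mu : Λ) :
    -- `{ h ∈ C^𝒯_μ : h*K_λ = h*m̃_λ } = A^𝒯_{μλ} * M_λ`
    {h : YS Yf → YS Yf → R |
      (∃ c ∈ Submodule.span k
          {x | ∃ a, InA k G Yf ω p e T a ∧ x = conv Yf e a (oneEl Yf e ω)},
        h = conv Yf e (oneEl Yf e mu) c) ∧
      conv Yf e h (Kel Yf ω p e lam) = conv Yf e h (mtil k G Yf ω p e lam)} =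
    {x : YS Yf → YS Yf → R |
      ∃ a, InA k G Yf ω p e T a ∧
        x = conv Yf e
          (conv Yf e (conv Yf e (oneEl Yf e mu) a) (oneEl Yf e lam))
          (Mel Yf ω p e lam)} :=
  stmt6_general k Yf ω p hpequiv e hee heu T hm_unit hm_inv_T lam mu
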